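/- arXiv:math/0601324 — 10 statements merged into one kernel-verified Lean document; each statement's English description precedes it below -/
import Mathlib

section
/- If a sequence (τ_n) of nonzero real numbers satisfies τ_{n+3}τ_n = τ_{n+2}² + τ_{n+1}² + J for all n, then the quantity N_n = (τ_{n+2}² + τ_{n+1}² + τ_n² + J)/(τ_{n+2}τ_{n+1}τ_n) is independent of n. -/
theorem conserved_quantity (J : ℝ) (τ : ℕ → ℝ) (hnz : ∀ n, τ n ≠ 0)
    (hrec : ∀ n, τ (n + 3) * τ n = τ (n + 2) ^ 2 + τ (n + 1) ^ 2 + J) :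
    ∀ m n : ℕ,
      (τ (m + 2) ^ 2 + τ (m + 1) ^ 2 + τ m ^ 2 + J) / (τ (m + 2) * τ (m + 1) * τ m) =
      (τ (n + 2) ^ 2 + τ (n + 1) ^ 2 + τ n ^ 2 + J) / (τ (n + 2) * τ (n + 1) * τ n) := by
  have step : ∀ n : ℕ,
      (τ (n + 1 + 2) ^ 2 + τ (n + 1 + 1) ^ 2 + τ (n + 1) ^ 2 + J) /
        (τ (n + 1 + 2) * τ (n + 1 + 1) * τ (n + 1)) =
      (τ (n + 2) ^ 2 + τ (n + 1) ^ 2 + τ n ^ 2 + J) / (τ (n + 2) * τ (n + 1) * τ n) := by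
    intro n
    have h := hrec n
    have h3 : τ (n + 1 + 2) = τ (n + 3) := by ring_nf
    have h2 : τ (n + 1 + 1) = τ (n + 2) := by ring_nf
    rw [h3, h2, div_eq_div_iff
      (by exact mul_ne_zero (mul_ne_zero (hnz _) (hnz _)) (hnz _))
      (by exact mul_ne_zero (mul_ne_zero (hnz _) (hnz _)) (hnz _))]
    linear_combination (τ (n + 2) * τ (n + 1) * (τ (n + 3) - τ n)) * h
  have base : ∀ n : ℕ,
      (τ (n + 2) ^ 2 + τ (n + 1) ^ 2 + τ n ^ 2 + J) / (τ (n + 2) * τ (n + 1) * τ n) =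
      (τ 2 ^ 2 + τ 1 ^ 2 + τ 0 ^ 2 + J) / (τ 2 * τ 1 * τ 0) := by
    intro n
    induction n with
    | zero => norm_num
    | succ k ih => rw [step k]; exact ih
  intro m n
  rw [base m, base n]
end

section
/- If a sequence (τ_n) of nonzero real numbers satisfies τ_{n+3}τ_n = τ_{n+2}² + τ_{n+1}² + J for all n, and N = (τ_2² + τ_1² + τ_0² + J)/(τ_2τ_1τ_0), then the sequence also satisfies the recurrence τ_{n+3} = N τ_{n+2} τ_{n+1} − τ_n for all n. -/
/-!
Subtracting two consecutive instances of the recurrence gives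
`τ (n+1) (τ (n+4) + τ (n+1)) = τ (n+3) (τ (n+3) + τ n)`, i.e. the ratio
`(τ (n+3) + τ n) / (τ (n+2) τ (n+1))` does not depend on `n`. At `n = 0` the recurrence turns
this ratio into `N`.
-/

section Recurrence

variable {K : Type*} (J : K) (τ : ℕ → K)

theorem mul_add_eq_mul_add_of_recurrence [CommRing K]
    (hrec : ∀ n, τ (n + 3) * τ n = τ (n + 2) ^ 2 + τ (n + 1) ^ 2 + J) (n : ℕ) :
    τ (n + 1) * (τ (n + 4) + τ (n + 1)) = τ (n + 3) * (τ (n + 3) + τ n) := by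
  linear_combination hrec (n + 1) - hrec n

theorem add_eq_mul_mul_of_recurrence [CommRing K] [IsDomain K] (hnz : ∀ n, τ n ≠ 0)
    (hrec : ∀ n, τ (n + 3) * τ n = τ (n + 2) ^ 2 + τ (n + 1) ^ 2 + J)
    (N : K) (h₀ : τ 3 + τ 0 = N * τ 2 * τ 1) :
    ∀ n, τ (n + 3) + τ n = N * τ (n + 2) * τ (n + 1) := by
  intro n
  induction n with
  | zero => exact h₀
  | succ n ih =>
    refine mul_left_cancel₀ (hnz (n + 1)) ?_
    calc τ (n + 1) * (τ (n + 4) + τ (n + 1))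
        = τ (n + 3) * (τ (n + 3) + τ n) := mul_add_eq_mul_add_of_recurrence J τ hrec n
      _ = τ (n + 1) * (N * τ (n + 3) * τ (n + 2)) := by rw [ih]; ring

theorem three_add_zero_eq_of_recurrence [Field K] (h0 : τ 0 ≠ 0) (h1 : τ 1 ≠ 0) (h2 : τ 2 ≠ 0)
    (hrec : τ 3 * τ 0 = τ 2 ^ 2 + τ 1 ^ 2 + J) :
    τ 3 + τ 0 =
      (τ 2 ^ 2 + τ 1 ^ 2 + τ 0 ^ 2 + J) / (τ 2 * τ 1 * τ 0) * τ 2 * τ 1 := by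
  field_simp
  linear_combination hrec

end Recurrence

theorem equivalent_recurrence (J : ℝ) (τ : ℕ → ℝ) (hnz : ∀ n, τ n ≠ 0)
    (hrec : ∀ n, τ (n + 3) * τ n = τ (n + 2) ^ 2 + τ (n + 1) ^ 2 + J)
    (N : ℝ) (hN : N = (τ 2 ^ 2 + τ 1 ^ 2 + τ 0 ^ 2 + J) / (τ 2 * τ 1 * τ 0)) :
    ∀ n, τ (n + 3) = N * τ (n + 2) * τ (n + 1) - τ n := by
  have h₀ : τ 3 + τ 0 = N * τ 2 * τ 1 :=
    hN ▸ three_add_zero_eq_of_recurrence J τ (hnz 0) (hnz 1) (hnz 2) (hrec 0)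
  intro n
  exact eq_sub_of_add_eq (add_eq_mul_mul_of_recurrence J τ hnz hrec N h₀ n)
end

section
/- Let p_n ∈ ℤ[N] be defined by p_0 = p_1 = p_2 = 1 and p_{n+3} = N·p_{n+2}·p_{n+1} − p_n. Then for all n ≥ 1, p_n is a monic polynomial of degree f_n − 1, where f_n is the n-th Fibonacci number (f_0 = 0, f_1 = 1, f_2 = 1). -/
theorem monic_of_fib_degree (p : ℕ → Polynomial ℤ)
    (h0 : p 0 = 1) (h1 : p 1 = 1) (h2 : p 2 = 1)
    (hrec : ∀ n, p (n + 3) = Polynomial.X * p (n + 2) * p (n + 1) - p n) :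
    ∀ n, 1 ≤ n → (p n).Monic ∧ (p n).natDegree = Nat.fib n - 1 := by
  have key : ∀ n, (p n).Monic ∧ (p n).natDegree = Nat.fib n - 1 := by
    intro n
    induction n using Nat.strong_induction_on with
    | _ n ih =>
      match n with
      | 0 => simp [h0]
      | 1 => simp [h1]
      | 2 => simp [h2]
      | (m+3) =>
        obtain ⟨hm2, hd2⟩ := ih (m+2) (by omega)
        obtain ⟨hm1, hd1⟩ := ih (m+1) (by omega)
        obtain ⟨hm0, hd0⟩ := ih m (by omega)
        have hX : (Polynomial.X * p (m+2) * p (m+1)).Monic :=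
          (Polynomial.monic_X.mul hm2).mul hm1
        have f1 : 0 < Nat.fib (m+1) := Nat.fib_pos.mpr (by omega)
        have f2 : 0 < Nat.fib (m+2) := Nat.fib_pos.mpr (by omega)
        have fm : Nat.fib m ≤ Nat.fib (m+2) := Nat.fib_le_fib_succ.trans Nat.fib_le_fib_succ
        have hdeg : (Polynomial.X * p (m+2) * p (m+1)).natDegree = Nat.fib (m+3) - 1 := by
          rw [Polynomial.natDegree_mul (Polynomial.monic_X.mul hm2).ne_zero hm1.ne_zero,
            Polynomial.natDegree_mul Polynomial.X_ne_zero hm2.ne_zero,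
            Polynomial.natDegree_X, hd2, hd1]
          have : Nat.fib (m+3) = Nat.fib (m+1) + Nat.fib (m+2) := Nat.fib_add_two
          omega
        have hlt : (p m).natDegree < (Polynomial.X * p (m+2) * p (m+1)).natDegree := by
          rw [hdeg, hd0]
          have : Nat.fib (m+3) = Nat.fib (m+1) + Nat.fib (m+2) := Nat.fib_add_two
          omega
        constructor
        · rw [hrec m]
          exact hX.sub_of_left (Polynomial.degree_lt_degree hlt)
        · rw [hrec m, Polynomial.natDegree_sub_eq_left_of_natDegree_lt hlt, hdeg]
  exact fun n _ => key n
end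

section
/- Let N > 2 be real and p_n be the sequence p_0 = p_1 = p_2 = 1, p_{n+3} = N·p_{n+2}·p_{n+1} − p_n. Then for all n ≥ 4, (N−1)^{f_n − 1} < p_n < N^{f_n − 1}, where f_n is the n-th Fibonacci number. -/
theorem growth_bounds (N : ℝ) (hN : 2 < N) (p : ℕ → ℝ)
    (h0 : p 0 = 1) (h1 : p 1 = 1) (h2 : p 2 = 1)
    (hrec : ∀ n, p (n + 3) = N * p (n + 2) * p (n + 1) - p n) :
    ∀ n, 4 ≤ n → (N - 1) ^ (Nat.fib n - 1) < p n ∧ p n < N ^ (Nat.fib n - 1) := by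
  have hN1 : (1:ℝ) < N - 1 := by linarith
  have hN0 : (0:ℝ) < N - 1 := by linarith
  have fibadd3 : ∀ k, Nat.fib (k+3) = Nat.fib (k+1) + Nat.fib (k+2) := fun k =>
    Nat.fib_add_two
  have fibadd4 : ∀ k, Nat.fib (k+4) = Nat.fib (k+2) + Nat.fib (k+3) := fun k =>
    Nat.fib_add_two
  have fibpos : ∀ k, 1 ≤ Nat.fib (k+1) := fun k => Nat.fib_pos.mpr (by omega)
  have fibpos2 : ∀ k, 1 ≤ Nat.fib (k+2) := fun k => Nat.fib_pos.mpr (by omega)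
  have fibpos3 : ∀ k, 1 ≤ Nat.fib (k+3) := fun k => Nat.fib_pos.mpr (by omega)
  have e1 : ∀ k, Nat.fib (k+3) - 1 = Nat.fib (k+1) + (Nat.fib (k+2) - 1) := by
    intro k
    have h := fibadd3 k
    have := fibpos2 k
    omega
  have e2 : ∀ k, Nat.fib (k+4) - 1 = Nat.fib (k+2) + (Nat.fib (k+3) - 1) := by
    intro k
    have h := fibadd4 k
    have := fibpos3 k
    omega
  have e3 : ∀ k, Nat.fib (k+4) - 1 = 1 + (Nat.fib (k+3) - 1) + (Nat.fib (k+2) - 1) := by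
    intro k
    have h := fibadd4 k
    have := fibpos3 k
    have := fibpos2 k
    omega
  -- key invariant: lower bound, monotonicity, ratio bound
  have key : ∀ k, (N-1)^(Nat.fib (k+2) - 1) ≤ p (k+2) ∧ p (k+1) ≤ p (k+2) ∧
      (N-1)^(Nat.fib (k+1)) * p (k+2) ≤ p (k+3) := by
    intro k
    induction k with
    | zero =>
      have hp3 : p 3 = N - 1 := by
        have := hrec 0
        rw [h0, h1, h2] at this
        linarith [this]
      refine ⟨?_, ?_, ?_⟩
      · simp [h2, Nat.fib]
      · simp [h1, h2]
      · simp [h2, hp3, Nat.fib]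
    | succ k ih =>
      obtain ⟨L, M, B⟩ := ih
      have pos2 : 0 < p (k+2) := lt_of_lt_of_le (pow_pos hN0 _) L
      have epow : (N-1)^(Nat.fib (k+3) - 1)
          = (N-1)^(Nat.fib (k+1)) * (N-1)^(Nat.fib (k+2) - 1) := by
        rw [← pow_add, e1]
      have L' : (N-1)^(Nat.fib (k+3) - 1) ≤ p (k+3) := by
        rw [epow]
        calc (N-1)^(Nat.fib (k+1)) * (N-1)^(Nat.fib (k+2) - 1)
            ≤ (N-1)^(Nat.fib (k+1)) * p (k+2) := by
              apply mul_le_mul_of_nonneg_left L (le_of_lt (pow_pos hN0 _))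
          _ ≤ p (k+3) := B
      have hone : (1:ℝ) ≤ (N-1)^(Nat.fib (k+1)) := one_le_pow₀ hN1.le
      have M' : p (k+2) ≤ p (k+3) := by
        calc p (k+2) = 1 * p (k+2) := (one_mul _).symm
          _ ≤ (N-1)^(Nat.fib (k+1)) * p (k+2) :=
              mul_le_mul_of_nonneg_right hone pos2.le
          _ ≤ p (k+3) := B
      have p3one : (1:ℝ) ≤ p (k+3) := by
        have : (1:ℝ) ≤ (N-1)^(Nat.fib (k+3) - 1) := one_le_pow₀ hN1.le
        linarith
      have pos3 : 0 < p (k+3) := by linarith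
      refine ⟨L', M', ?_⟩
      have hr := hrec (k+1)
      -- goal: (N-1)^(fib (k+2)) * p (k+3) ≤ p (k+4)
      have step1 : (N-1)^(Nat.fib (k+2)) ≤ (N-1) * p (k+2) := by
        have : (N-1)^(Nat.fib (k+2)) = (N-1) * (N-1)^(Nat.fib (k+2) - 1) := by
          rw [← pow_succ']
          congr 1
          have := fibpos2 k
          omega
        rw [this]
        exact mul_le_mul_of_nonneg_left L hN0.le
      calc (N-1)^(Nat.fib (k+2)) * p (k+3) ≤ ((N-1) * p (k+2)) * p (k+3) :=
            mul_le_mul_of_nonneg_right step1 pos3.le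
        _ ≤ N * p (k+3) * p (k+2) - p (k+1) := by nlinarith
        _ = p (k+4) := hr.symm
  have pos : ∀ k, 0 < p k := by
    intro k
    match k with
    | 0 => rw [h0]; norm_num
    | 1 => rw [h1]; norm_num
    | (k+2) => exact lt_of_lt_of_le (pow_pos hN0 _) (key k).1
  -- strict ratio bound
  have keyS : ∀ k, (N-1)^(Nat.fib (k+2)) * p (k+3) < p (k+4) := by
    intro k
    obtain ⟨L, M, B⟩ := key k
    obtain ⟨L', M', B'⟩ := key (k+1)
    have pos2 : 0 < p (k+2) := pos _
    have pos3 : 0 < p (k+3) := pos _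
    have p3one : (1:ℝ) < p (k+3) := by
      have h1e : (N-1)^(1:ℕ) ≤ (N-1)^(Nat.fib (k+3) - 1) := by
        apply pow_le_pow_right₀ hN1.le
        have h := fibadd3 k
        have := fibpos2 k
        have := fibpos k
        omega
      rw [pow_one] at h1e
      calc (1:ℝ) < N - 1 := hN1
        _ ≤ (N-1)^(Nat.fib (k+3) - 1) := h1e
        _ ≤ p (k+3) := L'
    have step1 : (N-1)^(Nat.fib (k+2)) ≤ (N-1) * p (k+2) := by
      have : (N-1)^(Nat.fib (k+2)) = (N-1) * (N-1)^(Nat.fib (k+2) - 1) := by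
        rw [← pow_succ']
        congr 1
        have := fibpos2 k
        omega
      rw [this]
      exact mul_le_mul_of_nonneg_left L hN0.le
    have hr := hrec (k+1)
    calc (N-1)^(Nat.fib (k+2)) * p (k+3) ≤ ((N-1) * p (k+2)) * p (k+3) :=
          mul_le_mul_of_nonneg_right step1 pos3.le
      _ < N * p (k+3) * p (k+2) - p (k+1) := by nlinarith
      _ = p (k+4) := hr.symm
  -- weak upper bounds
  have upperW : ∀ k, p (k+2) ≤ N^(Nat.fib (k+2) - 1) ∧ p (k+3) ≤ N^(Nat.fib (k+3) - 1) := by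
    intro k
    have hNpos : (0:ℝ) < N := by linarith
    induction k with
    | zero =>
      constructor
      · simp [h2, Nat.fib]
      · have hp3 : p 3 = N - 1 := by
          have := hrec 0
          rw [h0, h1, h2] at this
          linarith [this]
        have : Nat.fib 3 - 1 = 1 := by decide
        rw [hp3, this, pow_one]
        linarith
    | succ k ih =>
      obtain ⟨U1, U2⟩ := ih
      refine ⟨U2, ?_⟩
      have hr := hrec (k+1)
      have pos1 : 0 < p (k+1) := pos _
      have pos2 : 0 < p (k+2) := pos _
      have pos3 : 0 < p (k+3) := pos _
      have epow : N^(Nat.fib (k+4) - 1)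
          = N * N^(Nat.fib (k+3) - 1) * N^(Nat.fib (k+2) - 1) := by
        rw [e3, pow_add, pow_add, pow_one]
      calc p (k+4) = N * p (k+3) * p (k+2) - p (k+1) := hr
        _ ≤ N * p (k+3) * p (k+2) := by linarith
        _ ≤ N * N^(Nat.fib (k+3) - 1) * N^(Nat.fib (k+2) - 1) := by
            exact mul_le_mul (mul_le_mul_of_nonneg_left U2 hNpos.le) U1 pos2.le
              (by positivity)
        _ = N^(Nat.fib (k+4) - 1) := epow.symm
  -- finish
  intro n hn
  obtain ⟨k, rfl⟩ : ∃ k, n = k + 4 := ⟨n - 4, by omega⟩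
  constructor
  · -- strict lower bound
    have hS := keyS k
    have L' : (N-1)^(Nat.fib (k+3) - 1) ≤ p (k+3) := (key (k+1)).1
    have epow : (N-1)^(Nat.fib (k+4) - 1)
        = (N-1)^(Nat.fib (k+2)) * (N-1)^(Nat.fib (k+3) - 1) := by
      rw [← pow_add, e2]
    rw [epow]
    calc (N-1)^(Nat.fib (k+2)) * (N-1)^(Nat.fib (k+3) - 1)
        ≤ (N-1)^(Nat.fib (k+2)) * p (k+3) :=
          mul_le_mul_of_nonneg_left L' (le_of_lt (pow_pos hN0 _))
      _ < p (k+4) := hS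
  · -- strict upper bound
    have hNpos : (0:ℝ) < N := by linarith
    obtain ⟨U1, U2⟩ := upperW k
    have hr := hrec (k+1)
    have pos1 : 0 < p (k+1) := pos _
    have pos2 : 0 < p (k+2) := pos _
    have pos3 : 0 < p (k+3) := pos _
    have epow : N^(Nat.fib (k+4) - 1)
        = N * N^(Nat.fib (k+3) - 1) * N^(Nat.fib (k+2) - 1) := by
      rw [e3, pow_add, pow_add, pow_one]
    calc p (k+4) = N * p (k+3) * p (k+2) - p (k+1) := hr
      _ < N * p (k+3) * p (k+2) := by linarith
      _ ≤ N * N^(Nat.fib (k+3) - 1) * N^(Nat.fib (k+2) - 1) := by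
          exact mul_le_mul (mul_le_mul_of_nonneg_left U2 hNpos.le) U1 pos2.le
            (by positivity)
      _ = N^(Nat.fib (k+4) - 1) := epow.symm
end

section
/- Let N > 2 be real and p_n as above. Then lim_{n→∞} (log log p_n)/n = log φ, where φ = (1+√5)/2 is the golden ratio. -/
/-!
Taking logarithms turns the recurrence into an additive one: since `p` is nondecreasing and `1 ≤ p`,
`(N - 1) p (n+2) p (n+1) ≤ p (n+3) ≤ N p (n+2) p (n+1)`, so `log p (n+3)` is the sum of the two
previous terms up to an additive constant between `log (N - 1) > 0` and `log N`. Such a sequence is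
squeezed between `(fib n - 1) log (N - 1)` and `(fib n - 1) log N`, and `fib n` lies between two
powers of `φ` with exponents `n + O(1)`. Hence `log (log p n) = n log φ + O(1)`.
-/

open Filter Topology Real goldenRatio

section Fibonacci

lemma fib_add_one_le_goldenRatio_pow (n : ℕ) : (Nat.fib (n + 1) : ℝ) ≤ φ ^ n := by
  have hψ : ψ * Nat.fib n ≤ 0 := mul_nonpos_of_nonpos_of_nonneg goldenConj_neg.le (by positivity)
  linarith [fib_succ_sub_goldenConj_mul_fib n]

lemma goldenRatio_pow_le_fib_add_two (n : ℕ) : φ ^ n ≤ Nat.fib (n + 2) := by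
  have hψ : ψ * φ ^ n ≤ ψ * Nat.fib (n + 1) :=
    mul_le_mul_of_nonpos_left (fib_add_one_le_goldenRatio_pow n) goldenConj_neg.le
  have hφψ : φ ^ (n + 1) + ψ * φ ^ n = φ ^ n := by
    linear_combination φ ^ n * goldenRatio_add_goldenConj
  linarith [fib_succ_sub_goldenConj_mul_fib (n + 1)]

lemma goldenRatio_pow_le_fib_add_three_sub_one (n : ℕ) : φ ^ n ≤ (Nat.fib (n + 3) : ℝ) - 1 := by
  have h1 : (1 : ℝ) ≤ Nat.fib (n + 1) := by exact_mod_cast Nat.fib_pos.2 n.succ_pos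
  have h3 : (Nat.fib (n + 3) : ℝ) = Nat.fib (n + 1) + Nat.fib (n + 2) := by
    exact_mod_cast Nat.fib_add_two
  linarith [goldenRatio_pow_le_fib_add_two n]

lemma fib_sub_one_mul_le {x : ℕ → ℝ} {d : ℝ} (h0 : 0 ≤ x 0) (h1 : 0 ≤ x 1)
    (hx : ∀ n, x (n + 1) + x n + d ≤ x (n + 2)) (n : ℕ) :
    ((Nat.fib (n + 1) : ℝ) - 1) * d ≤ x n := by
  induction n using Nat.twoStepInduction with
  | zero => simpa using h0
  | one => simpa using h1
  | more n ih₀ ih₁ =>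
    have hfib : (Nat.fib (n + 3) : ℝ) = Nat.fib (n + 1) + Nat.fib (n + 2) := by
      exact_mod_cast Nat.fib_add_two
    have hsplit : ((Nat.fib (n + 3) : ℝ) - 1) * d =
        ((Nat.fib (n + 1) : ℝ) - 1) * d + ((Nat.fib (n + 2) : ℝ) - 1) * d + d := by
      rw [hfib]; ring
    show ((Nat.fib (n + 3) : ℝ) - 1) * d ≤ x (n + 2)
    linarith [hx n]

lemma le_fib_sub_one_mul {x : ℕ → ℝ} {d : ℝ} (h0 : x 0 ≤ 0) (h1 : x 1 ≤ 0)
    (hx : ∀ n, x (n + 2) ≤ x (n + 1) + x n + d) (n : ℕ) :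
    x n ≤ ((Nat.fib (n + 1) : ℝ) - 1) * d := by
  have := fib_sub_one_mul_le (x := fun n ↦ -x n) (d := -d) (by simpa) (by simpa)
    (fun n ↦ by linarith [hx n]) n
  linarith

end Fibonacci

section Recurrence

variable {N : ℝ} {p : ℕ → ℝ}

lemma one_le_and_le_succ_of_rec (hN : 2 ≤ N)
    (hrec : ∀ n, p (n + 3) = N * p (n + 2) * p (n + 1) - p n)
    (hp0 : 1 ≤ p 0) (h01 : p 0 ≤ p 1) (h12 : p 1 ≤ p 2) (n : ℕ) :
    1 ≤ p n ∧ p n ≤ p (n + 1) := by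
  suffices h : ∀ n, 1 ≤ p n ∧ p n ≤ p (n + 1) ∧ p (n + 1) ≤ p (n + 2) from ⟨(h n).1, (h n).2.1⟩
  intro n
  induction n with
  | zero => exact ⟨hp0, h01, h12⟩
  | succ n ih =>
    obtain ⟨hp, hle₀, hle₁⟩ := ih
    refine ⟨by linarith, hle₁, ?_⟩
    -- `p (n+3) ≥ 2 p (n+2) p (n+1) - p n ≥ p (n+2) + (p (n+1) - p n)`
    have hprod : p (n + 2) ≤ p (n + 2) * p (n + 1) :=
      le_mul_of_one_le_right (by linarith) (by linarith)
    have hN' : 2 * (p (n + 2) * p (n + 1)) ≤ N * (p (n + 2) * p (n + 1)) :=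
      mul_le_mul_of_nonneg_right hN (by linarith)
    show p (n + 2) ≤ p (n + 3)
    rw [hrec n]
    linarith

lemma sub_one_mul_le_of_rec (hN : 2 ≤ N)
    (hrec : ∀ n, p (n + 3) = N * p (n + 2) * p (n + 1) - p n)
    (hp0 : 1 ≤ p 0) (h01 : p 0 ≤ p 1) (h12 : p 1 ≤ p 2) (n : ℕ) :
    (N - 1) * (p (n + 2) * p (n + 1)) ≤ p (n + 3) := by
  have hmono := one_le_and_le_succ_of_rec hN hrec hp0 h01 h12
  have hprod : p (n + 1) ≤ p (n + 2) * p (n + 1) :=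
    le_mul_of_one_le_left (by linarith [(hmono (n + 1)).1]) (hmono (n + 2)).1
  rw [hrec n]
  linarith [(hmono n).2]

lemma le_mul_of_rec (hN : 2 ≤ N)
    (hrec : ∀ n, p (n + 3) = N * p (n + 2) * p (n + 1) - p n)
    (hp0 : 1 ≤ p 0) (h01 : p 0 ≤ p 1) (h12 : p 1 ≤ p 2) (n : ℕ) :
    p (n + 3) ≤ N * (p (n + 2) * p (n + 1)) := by
  rw [hrec n]
  linarith [(one_le_and_le_succ_of_rec hN hrec hp0 h01 h12 n).1]

lemma fib_sub_one_mul_log_le_log_of_rec (hN : 2 ≤ N)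
    (hrec : ∀ n, p (n + 3) = N * p (n + 2) * p (n + 1) - p n)
    (hp0 : 1 ≤ p 0) (h01 : p 0 ≤ p 1) (h12 : p 1 ≤ p 2) (n : ℕ) :
    ((Nat.fib (n + 1) : ℝ) - 1) * log (N - 1) ≤ log (p (n + 1)) := by
  have hpos k : 0 < p k := by linarith [(one_le_and_le_succ_of_rec hN hrec hp0 h01 h12 k).1]
  refine fib_sub_one_mul_le (x := fun n ↦ log (p (n + 1))) (log_nonneg (by linarith))
    (log_nonneg (by linarith)) (fun k ↦ ?_) n
  have hprod : 0 < p (k + 2) * p (k + 1) := mul_pos (hpos _) (hpos _)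
  show log (p (k + 2)) + log (p (k + 1)) + log (N - 1) ≤ log (p (k + 3))
  rw [← log_mul (hpos _).ne' (hpos _).ne', ← log_mul hprod.ne' (by linarith)]
  exact log_le_log (mul_pos hprod (by linarith))
    (by linarith [sub_one_mul_le_of_rec hN hrec hp0 h01 h12 k])

lemma log_le_fib_sub_one_mul_log_of_rec (hN : 2 ≤ N)
    (hrec : ∀ n, p (n + 3) = N * p (n + 2) * p (n + 1) - p n)
    (h0 : p 0 = 1) (h1 : p 1 = 1) (h2 : p 2 = 1) (n : ℕ) :
    log (p (n + 1)) ≤ ((Nat.fib (n + 1) : ℝ) - 1) * log N := by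
  have hp0 : 1 ≤ p 0 := h0.ge
  have h01 : p 0 ≤ p 1 := (h0.trans h1.symm).le
  have h12 : p 1 ≤ p 2 := (h1.trans h2.symm).le
  have hpos k : 0 < p k := by linarith [(one_le_and_le_succ_of_rec hN hrec hp0 h01 h12 k).1]
  refine le_fib_sub_one_mul (x := fun n ↦ log (p (n + 1))) (by simp [h1]) (by simp [h2])
    (fun k ↦ ?_) n
  have hprod : 0 < p (k + 2) * p (k + 1) := mul_pos (hpos _) (hpos _)
  show log (p (k + 3)) ≤ log (p (k + 2)) + log (p (k + 1)) + log N
  rw [← log_mul (hpos _).ne' (hpos _).ne', ← log_mul hprod.ne' (by linarith)]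
  exact log_le_log (hpos _) (by linarith [le_mul_of_rec hN hrec hp0 h01 h12 k])

lemma log_log_mem_of_rec (hN : 2 < N)
    (hrec : ∀ n, p (n + 3) = N * p (n + 2) * p (n + 1) - p n)
    (h0 : p 0 = 1) (h1 : p 1 = 1) (h2 : p 2 = 1) (m : ℕ) :
    m * log φ + log (log (N - 1)) ≤ log (log (p (m + 3))) ∧
      log (log (p (m + 3))) ≤ (m + 2) * log φ + log (log N) := by
  set F : ℝ := (Nat.fib (m + 3) : ℝ) - 1
  have hFlo : φ ^ m ≤ F := goldenRatio_pow_le_fib_add_three_sub_one m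
  have hFhi : F ≤ φ ^ (m + 2) := by linarith [fib_add_one_le_goldenRatio_pow (m + 2)]
  have hF : 0 < F := (pow_pos goldenRatio_pos m).trans_le hFlo
  have hlogN₁ : 0 < log (N - 1) := log_pos (by linarith)
  have hlo : F * log (N - 1) ≤ log (p (m + 3)) :=
    fib_sub_one_mul_log_le_log_of_rec hN.le hrec h0.ge (h0.trans h1.symm).le
      (h1.trans h2.symm).le (m + 2)
  have hhi : log (p (m + 3)) ≤ F * log N :=
    log_le_fib_sub_one_mul_log_of_rec hN.le hrec h0 h1 h2 (m + 2)
  have hlogF_lo : m * log φ ≤ log F := by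
    rw [← log_pow]; exact log_le_log (by positivity) hFlo
  have hlogF_hi : log F ≤ (m + 2) * log φ := by
    rw [← Nat.cast_ofNat, ← Nat.cast_add, ← log_pow]; exact log_le_log hF hFhi
  have hlogp : 0 < log (p (m + 3)) := (mul_pos hF hlogN₁).trans_le hlo
  constructor
  · calc m * log φ + log (log (N - 1)) ≤ log F + log (log (N - 1)) := by linarith
      _ = log (F * log (N - 1)) := (log_mul hF.ne' hlogN₁.ne').symm
      _ ≤ log (log (p (m + 3))) := log_le_log (mul_pos hF hlogN₁) hlo
  · calc log (log (p (m + 3))) ≤ log (F * log N) := log_le_log hlogp hhi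
      _ = log F + log (log N) := log_mul hF.ne' (log_pos (by linarith)).ne'
      _ ≤ (m + 2) * log φ + log (log N) := by linarith

end Recurrence

lemma tendsto_div_natCast_of_sub_mul_mem_Icc {f : ℕ → ℝ} {L a b : ℝ}
    (h : ∀ᶠ n : ℕ in atTop, f n - n * L ∈ Set.Icc a b) :
    Tendsto (fun n ↦ f n / n) atTop (𝓝 L) := by
  have hlim (c : ℝ) : Tendsto (fun n : ℕ ↦ L + c / n) atTop (𝓝 L) := by
    simpa using tendsto_const_nhds.add (tendsto_const_div_atTop_nhds_zero_nat c)
  refine tendsto_of_tendsto_of_tendsto_of_le_of_le' (hlim a) (hlim b) ?_ ?_ <;>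
    filter_upwards [h, eventually_gt_atTop 0] with n hn hpos <;>
    have hn₀ : (0 : ℝ) < n := Nat.cast_pos.2 hpos
  · rw [add_div' _ _ _ hn₀.ne', div_le_div_iff_of_pos_right hn₀]
    linarith [hn.1]
  · rw [add_div' _ _ _ hn₀.ne', div_le_div_iff_of_pos_right hn₀]
    linarith [hn.2]

theorem double_exponential_growth (N : ℝ) (hN : 2 < N) (p : ℕ → ℝ)
    (h0 : p 0 = 1) (h1 : p 1 = 1) (h2 : p 2 = 1)
    (hrec : ∀ n, p (n + 3) = N * p (n + 2) * p (n + 1) - p n) :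
    Tendsto (fun n : ℕ => Real.log (Real.log (p n)) / n) atTop
      (nhds (Real.log ((1 + Real.sqrt 5) / 2))) := by
  refine tendsto_div_natCast_of_sub_mul_mem_Icc (L := log φ)
    (a := log (log (N - 1)) - 3 * log φ) (b := log (log N) - log φ) ?_
  filter_upwards [eventually_ge_atTop 3] with n hn
  obtain ⟨m, rfl⟩ := Nat.exists_eq_add_of_le' hn
  obtain ⟨hlo, hhi⟩ := log_log_mem_of_rec hN hrec h0 h1 h2 m
  push_cast
  constructor <;> linarith
end

section
/- For every integer N ≥ 3 and every n ≥ 0, the triple (p_n(N), p_{n+1}(N), p_{n+2}(N)) is an integer solution of x² + y² + z² − N·x·y·z + J = 0 with J = N − 3. -/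
theorem triples_solve_mordell (N : ℤ) (hN : 3 ≤ N) (p : ℕ → ℤ)
    (h0 : p 0 = 1) (h1 : p 1 = 1) (h2 : p 2 = 1)
    (hrec : ∀ n, p (n + 3) = N * p (n + 2) * p (n + 1) - p n) :
    ∀ n : ℕ, p n ^ 2 + p (n + 1) ^ 2 + p (n + 2) ^ 2
      - N * p n * p (n + 1) * p (n + 2) + (N - 3) = 0 := by
  intro n
  induction n with
  | zero => simp [h0, h1, h2]
  | succ n ih =>
    have h := hrec n
    linear_combination ih + (p (n+3) + N * p (n+2) * p (n+1) - p n - N * p (n+1) * p (n+2)) * h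
end

section
/- For every integer N ≥ 3, the Diophantine equation x² + y² + z² − N·x·y·z + (N−3) = 0 has infinitely many integer solution triples; in particular the triples (p_n(N), p_{n+1}(N), p_{n+2}(N)) for n ≥ 0 are pairwise distinct. -/
/-!
The form `Q(x, y, z) = x² + y² + z² - N x y z` is quadratic in each variable, so replacing `x`
by the other root `N y z - x` of `Q(·, y, z) = Q(x, y, z)` (Vieta jumping) preserves it. The
recurrence is exactly this move applied to consecutive triples, so every triple
`(pₙ, pₙ₊₁, pₙ₊₂)` has `Q = Q(1, 1, 1) = 3 - N`. For `N ≥ 3` the move strictly increases the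
largest entry, so the triples are pairwise distinct and the solution set is infinite.
-/

section Form

variable {R : Type*} [CommRing R]

def markovForm (N x y z : R) : R := x ^ 2 + y ^ 2 + z ^ 2 - N * x * y * z

theorem markovForm_vieta (N x y z : R) :
    markovForm N y z (N * z * y - x) = markovForm N x y z := by
  unfold markovForm; ring

theorem markovForm_recurrence_eq (N : R) {p : ℕ → R}
    (hrec : ∀ n, p (n + 3) = N * p (n + 2) * p (n + 1) - p n) (n : ℕ) :
    markovForm N (p n) (p (n + 1)) (p (n + 2)) = markovForm N (p 0) (p 1) (p 2) := by
  induction n with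
  | zero => rfl
  | succ n ih => rw [← ih, ← markovForm_vieta N (p n), ← hrec]

end Form

section Growth

variable {R : Type*} [CommRing R] [LinearOrder R] [IsStrictOrderedRing R]

theorem lt_mul_mul_sub {N x y z : R} (hN : 3 ≤ N) (hx : 1 ≤ x) (hxy : x ≤ y) (hyz : y ≤ z) :
    z < N * z * y - x := by
  have hz : 0 < z := by linarith
  have : 3 * z ≤ N * z * y := by
    calc 3 * z = 3 * z * 1 := (mul_one _).symm
      _ ≤ N * z * y := by gcongr; linarith
  linarith

variable {N : R} {p : ℕ → R} (hN : 3 ≤ N)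
  (hrec : ∀ n, p (n + 3) = N * p (n + 2) * p (n + 1) - p n)
  (h01 : 1 ≤ p 0) (h12 : p 0 ≤ p 1) (h23 : p 1 ≤ p 2)
include hN hrec h01 h12 h23

theorem one_le_and_le_and_le_of_recurrence (n : ℕ) :
    1 ≤ p n ∧ p n ≤ p (n + 1) ∧ p (n + 1) ≤ p (n + 2) := by
  induction n with
  | zero => exact ⟨h01, h12, h23⟩
  | succ n ih =>
    obtain ⟨h1, hle, hle'⟩ := ih
    have hlt := hrec n ▸ lt_mul_mul_sub hN h1 hle hle'
    exact ⟨by linarith, hle', hlt.le⟩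

theorem strictMono_of_recurrence : StrictMono fun n => p (n + 2) :=
  strictMono_nat_of_lt_succ fun n => by
    obtain ⟨h1, hle, hle'⟩ := one_le_and_le_and_le_of_recurrence hN hrec h01 h12 h23 n
    exact hrec n ▸ lt_mul_mul_sub hN h1 hle hle'

end Growth

theorem infinitely_many_solutions (N : ℤ) (hN : 3 ≤ N) (p : ℕ → ℤ)
    (h0 : p 0 = 1) (h1 : p 1 = 1) (h2 : p 2 = 1)
    (hrec : ∀ n, p (n + 3) = N * p (n + 2) * p (n + 1) - p n) :
    {t : ℤ × ℤ × ℤ | t.1 ^ 2 + t.2.1 ^ 2 + t.2.2 ^ 2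
        - N * t.1 * t.2.1 * t.2.2 + (N - 3) = 0}.Infinite ∧
    Function.Injective (fun n : ℕ => (p n, p (n + 1), p (n + 2))) := by
  have hmono := strictMono_of_recurrence hN hrec (by rw [h0]) (by rw [h0, h1]) (by rw [h1, h2])
  have hinj : Function.Injective (fun n : ℕ => (p n, p (n + 1), p (n + 2))) :=
    fun m n h => hmono.injective (Prod.ext_iff.1 (Prod.ext_iff.1 h).2).2
  refine ⟨Set.infinite_of_injective_forall_mem hinj fun n => ?_, hinj⟩
  have hQ := markovForm_recurrence_eq N hrec n
  rw [h0, h1, h2] at hQ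
  simp only [markovForm] at hQ
  simp only [Set.mem_ofPred_eq]
  linear_combination hQ
end

section
/- The Markoff-type sequence defined by τ_0 = τ_1 = τ_2 = 1 and τ_{n+3}·τ_n = τ_{n+2}² + τ_{n+1}² consists entirely of positive integers, and every consecutive triple (τ_n, τ_{n+1}, τ_{n+2}) satisfies Markoff's equation x² + y² + z² = 3xyz. -/
theorem markoff_sequence (τ : ℕ → ℚ)
    (h0 : τ 0 = 1) (h1 : τ 1 = 1) (h2 : τ 2 = 1)
    (hrec : ∀ n, τ (n + 3) * τ n = τ (n + 2) ^ 2 + τ (n + 1) ^ 2) :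
    (∀ n, ∃ k : ℤ, 0 < k ∧ τ n = (k : ℚ)) ∧
    (∀ n, τ n ^ 2 + τ (n + 1) ^ 2 + τ (n + 2) ^ 2
        = 3 * τ n * τ (n + 1) * τ (n + 2)) := by
  have key : ∀ n, ((∃ k : ℤ, 0 < k ∧ τ n = (k : ℚ)) ∧
      (∃ k : ℤ, 0 < k ∧ τ (n + 1) = (k : ℚ)) ∧
      (∃ k : ℤ, 0 < k ∧ τ (n + 2) = (k : ℚ))) ∧
      τ n ^ 2 + τ (n + 1) ^ 2 + τ (n + 2) ^ 2
        = 3 * τ n * τ (n + 1) * τ (n + 2) := by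
    intro n
    induction n with
    | zero =>
      refine ⟨⟨⟨1, one_pos, by simpa using h0⟩, ⟨1, one_pos, by simpa using h1⟩,
        ⟨1, one_pos, by simpa using h2⟩⟩, by rw [h0, h1, h2]; norm_num⟩
    | succ n ih =>
      obtain ⟨⟨⟨a, ha, hta⟩, ⟨b, hb, htb⟩, ⟨c, hc, htc⟩⟩, hm⟩ := ih
      have haq : (0 : ℚ) < (a : ℚ) := by exact_mod_cast ha
      have hbq : (0 : ℚ) < (b : ℚ) := by exact_mod_cast hb
      have hcq : (0 : ℚ) < (c : ℚ) := by exact_mod_cast hc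
      have hr := hrec n
      have hane : (a : ℚ) ≠ 0 := ne_of_gt haq
      -- τ(n+3) = 3bc - a
      have hτ3 : τ (n + 3) = 3 * (b : ℚ) * c - a := by
        have h1 : τ (n + 3) * (a : ℚ) = (3 * (b : ℚ) * c - a) * a := by
          rw [hta, htb, htc] at hr
          rw [hta, htb, htc] at hm
          linear_combination hr + hm
        exact mul_right_cancel₀ hane h1
      have hpos : (0 : ℤ) < 3 * b * c - a := by
        have : (0 : ℚ) < 3 * (b : ℚ) * c - a := by
          have h2 : (0 : ℚ) < τ (n + 3) * τ n := by
            rw [hr, htb, htc]; positivity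
          rw [hta] at h2
          rw [← hτ3]
          nlinarith [h2, haq]
        exact_mod_cast this
      have hτ3' : τ (n + 3) = ((3 * b * c - a : ℤ) : ℚ) := by
        push_cast; exact hτ3
      have hshift : n + 1 + 2 = n + 3 := by ring
      refine ⟨⟨⟨b, hb, by simpa using htb⟩, ⟨c, hc, by simpa using htc⟩,
        ⟨3 * b * c - a, hpos, by rw [hshift]; exact hτ3'⟩⟩, ?_⟩
      show τ (n + 1) ^ 2 + τ (n + 1 + 1) ^ 2 + τ (n + 1 + 2) ^ 2
        = 3 * τ (n + 1) * τ (n + 1 + 1) * τ (n + 1 + 2)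
      have e1 : n + 1 + 1 = n + 2 := by ring
      rw [e1, hshift, htb, htc, hτ3]
      rw [hta, htb, htc] at hm
      linear_combination hm
  refine ⟨fun n => (key n).1.1, fun n => (key n).2⟩
end

section
/- If a sequence (τ_n) of nonzero integers satisfies τ_{n+3} = 3τ_{n+2}τ_{n+1} − τ_n with τ_0 = τ_1 = τ_2 = 1, then it also satisfies the bilinear recurrence τ_{n+3}·τ_n = τ_{n+2}² + τ_{n+1}² for all n ≥ 0. -/
theorem linear_implies_bilinear (τ : ℕ → ℤ) (hnz : ∀ n, τ n ≠ 0)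
    (h0 : τ 0 = 1) (h1 : τ 1 = 1) (h2 : τ 2 = 1)
    (hrec : ∀ n, τ (n + 3) = 3 * τ (n + 2) * τ (n + 1) - τ n) :
    ∀ n, τ (n + 3) * τ n = τ (n + 2) ^ 2 + τ (n + 1) ^ 2 := by
  have E : ∀ n, τ (n+2)^2 + τ (n+1)^2 + τ n ^2 - 3 * τ (n+2) * τ (n+1) * τ n = 0 := by
    intro n
    induction n with
    | zero => simp [h0, h1, h2]
    | succ k ih =>
      have hr := hrec k
      show τ (k+3) ^2 + τ (k+2)^2 + τ (k+1)^2 - 3 * τ (k+3) * τ (k+2) * τ (k+1) = 0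
      rw [hr]; linear_combination ih
  intro n
  have hE := E n
  have hr := hrec n
  rw [hr]; linear_combination -hE
end

section
/- For real N > 2, the sequence p_n defined by p_0 = p_1 = p_2 = 1 and p_{n+3} = N·p_{n+2}p_{n+1} − p_n satisfies the ratio inequality ρ_{n+2} > ρ_{n+1}·ρ_n for all n ≥ 3, where ρ_n = p_{n+1}/p_n. -/
/-!
The recurrence conserves `p (n + 3) * p n - p (n + 2) ^ 2 - p (n + 1) ^ 2`, which for the
initial values `1, 1, 1` equals `N - 3`. Since `N ≥ 2` makes the sequence nondecreasing from `1`,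
`p (n + 1) ^ 2 + N - 3 > 0`, so `p (n + 3) * p n > p (n + 2) ^ 2`; and the right-hand side of the
ratio inequality telescopes to `p (n + 2) / p n`.
-/

theorem div_mul_div_lt_div_of_sq_lt {a b c d : ℝ} (ha : 0 < a) (hb : 0 < b) (hc : 0 < c)
    (h : c ^ 2 < d * a) : c / b * (b / a) < d / c := by
  rw [div_mul_div_cancel₀ hb.ne', div_lt_div_iff₀ ha hc]
  linarith

section Recurrence

variable {N : ℝ} {p : ℕ → ℝ} (hrec : ∀ n, p (n + 3) = N * p (n + 2) * p (n + 1) - p n)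
include hrec

theorem recurrence_invariant (n : ℕ) :
    p (n + 3) * p n - p (n + 2) ^ 2 - p (n + 1) ^ 2 = p 3 * p 0 - p 2 ^ 2 - p 1 ^ 2 := by
  induction n with
  | zero => rfl
  | succ k ih =>
    rw [← ih, hrec (k + 1), hrec k]
    ring

theorem recurrence_le_succ (hN : 2 ≤ N) {n : ℕ} (hn : 1 ≤ p n) (hn1 : p n ≤ p (n + 1))
    (hn2 : p (n + 1) ≤ p (n + 2)) : p (n + 2) ≤ p (n + 3) := by
  have hprod : p (n + 2) + p n ≤ 2 * (p (n + 2) * p (n + 1)) := by nlinarith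
  rw [hrec n]
  nlinarith

theorem recurrence_monotone (hN : 2 ≤ N) (h0 : 1 ≤ p 0) (h01 : p 0 ≤ p 1) (h12 : p 1 ≤ p 2) :
    Monotone p := by
  have key : ∀ n, 1 ≤ p n ∧ p n ≤ p (n + 1) ∧ p (n + 1) ≤ p (n + 2) := by
    intro n
    induction n with
    | zero => exact ⟨h0, h01, h12⟩
    | succ k ih =>
      obtain ⟨hk, hk1, hk2⟩ := ih
      exact ⟨hk.trans hk1, hk2, recurrence_le_succ hrec hN hk hk1 hk2⟩
  exact monotone_nat_of_le_succ fun n => (key n).2.1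

end Recurrence

theorem ratio_inequality (N : ℝ) (hN : 2 < N) (p : ℕ → ℝ)
    (h0 : p 0 = 1) (h1 : p 1 = 1) (h2 : p 2 = 1)
    (hrec : ∀ n, p (n + 3) = N * p (n + 2) * p (n + 1) - p n) :
    ∀ n, 3 ≤ n →
      p (n + 3) / p (n + 2) > (p (n + 2) / p (n + 1)) * (p (n + 1) / p n) := by
  intro n _
  have hmono : Monotone p :=
    recurrence_monotone hrec hN.le h0.ge (h0.trans h1.symm).le (h1.trans h2.symm).le
  have hone (k : ℕ) : 1 ≤ p k := h0 ▸ hmono (Nat.zero_le k)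
  have hinv : p (n + 3) * p n - p (n + 2) ^ 2 - p (n + 1) ^ 2 = N - 3 := by
    rw [recurrence_invariant hrec n, hrec 0, h0, h1, h2]
    ring
  refine div_mul_div_lt_div_of_sq_lt (by linarith [hone n]) (by linarith [hone (n + 1)])
    (by linarith [hone (n + 2)]) ?_
  nlinarith [hone (n + 1)]
end
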